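/- Let λ ≥ 0, let ψ ∈ P^r satisfy Γ_λ(ψ) = L(1), and let φ ∈ P^r satisfy φ' − λ φ − L̂(φ(t₁)) = L(1) on I. Then the initial values satisfy φ(t₀) = −ψ(t₀). -/

import Mathlib

open Polynomial MeasureTheory intervalIntegral

/-- The rescaled Legendre polynomials on `[t₀, t₁]`: `K i` has degree `i`,
`K i (t₁) = 1`, `K i (t₀) = (-1)^i`, and they are `L²(t₀,t₁)`-orthogonal with
`∫ K i ^ 2 = (t₁ - t₀)/(2 i + 1)`. -/
def IsLegendreBasis (t₀ t₁ : ℝ) (K : ℕ → Polynomial ℝ) : Prop :=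
  (∀ i, (K i).natDegree = i) ∧ (∀ i, (K i).eval t₁ = 1) ∧
  (∀ i, (K i).eval t₀ = (-1 : ℝ) ^ i) ∧
  (∀ i j, (∫ t in t₀..t₁, (K i).eval t * (K j).eval t) =
    if i = j then (t₁ - t₀) / (2 * (i : ℝ) + 1) else 0)

/-- The lifting operator `L(z) = (z/k) ∑_{i=0}^r (-1)^i (2i+1) K_i`. -/
noncomputable def Lop (t₀ t₁ : ℝ) (r : ℕ) (K : ℕ → Polynomial ℝ) (z : ℝ) : Polynomial ℝ :=
  Polynomial.C (z / (t₁ - t₀)) *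
    ∑ i ∈ Finset.range (r + 1), Polynomial.C ((-1 : ℝ) ^ i * (2 * (i : ℝ) + 1)) * K i

/-- The endpoint lifting operator `L̂(z) = (z/k) ∑_{i=0}^r (2i+1) K_i`. -/
noncomputable def LopE (t₀ t₁ : ℝ) (r : ℕ) (K : ℕ → Polynomial ℝ) (z : ℝ) : Polynomial ℝ :=
  Polynomial.C (z / (t₁ - t₀)) *
    ∑ i ∈ Finset.range (r + 1), Polynomial.C (2 * (i : ℝ) + 1) * K i

/-- The scalar dG operator `Γ_λ(v) = v' + L(v(t₀)) + λ v`. -/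
noncomputable def Gam (t₀ t₁ : ℝ) (r : ℕ) (K : ℕ → Polynomial ℝ) (lam : ℝ)
    (v : Polynomial ℝ) : Polynomial ℝ :=
  Polynomial.derivative v + Lop t₀ t₁ r K (v.eval t₀) + Polynomial.C lam * v

/-!
Test the equation for `ψ` against `φ` and the equation for `φ` against `ψ`. The lifting
identities `∫ L(z) V = z V(t₀)` and `∫ L̂(z) V = z V(t₁)` turn the lifting terms into point values,
the `λ`-terms cancel in the sum, and `∫ ψ' φ + ∫ φ' ψ = [ψ φ]_{t₀}^{t₁}` cancels what is left of the
left-hand side, so `φ(t₀) + ψ(t₀) = 0`.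
-/

noncomputable def polyIntegral (a b : ℝ) : ℝ[X] →ₗ[ℝ] ℝ where
  toFun p := ∫ t in a..b, p.eval t
  map_add' p q := by
    simp only [eval_add]
    exact integral_add (p.continuous.intervalIntegrable a b) (q.continuous.intervalIntegrable a b)
  map_smul' c p := by simp [intervalIntegral.integral_const_mul]

lemma polyIntegral_apply (a b : ℝ) (p : ℝ[X]) :
    polyIntegral a b p = ∫ t in a..b, p.eval t := rfl

lemma polyIntegral_derivative (a b : ℝ) (p : ℝ[X]) :
    polyIntegral a b (derivative p) = p.eval b - p.eval a :=
  integral_eq_sub_of_hasDerivAt (fun x _ => p.hasDerivAt x)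
    ((derivative p).continuous.intervalIntegrable a b)

namespace IsLegendreBasis

variable {t₀ t₁ : ℝ} {K : ℕ → ℝ[X]}

lemma ne_zero (hK : IsLegendreBasis t₀ t₁ K) (i : ℕ) : K i ≠ 0 := by
  intro h
  simpa [h] using hK.2.1 i

noncomputable def toSequence (hK : IsLegendreBasis t₀ t₁ K) : Polynomial.Sequence ℝ where
  elems' := K
  degree_eq' i := by rw [degree_eq_natDegree (hK.ne_zero i), hK.1 i]

lemma span_eq_degreeLE (hK : IsLegendreBasis t₀ t₁ K) (r : ℕ) :
    Submodule.span ℝ (K '' Set.Iic r) = degreeLE ℝ r :=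
  hK.toSequence.span_degreeLE fun i _ =>
    (leadingCoeff_ne_zero.mpr (hK.ne_zero i)).isUnit

lemma polyIntegral_mul (hK : IsLegendreBasis t₀ t₁ K) (i j : ℕ) :
    polyIntegral t₀ t₁ (K i * K j) = if i = j then (t₁ - t₀) / (2 * (i : ℝ) + 1) else 0 := by
  simpa only [polyIntegral_apply, eval_mul] using hK.2.2.2 i j

lemma polyIntegral_mul_eq_of_forall_le (hK : IsLegendreBasis t₀ t₁ K) {r : ℕ} {P : ℝ[X]}
    {z s : ℝ} (hP : ∀ j ≤ r, polyIntegral t₀ t₁ (P * K j) = z * (K j).eval s)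
    {V : ℝ[X]} (hV : V.natDegree ≤ r) :
    polyIntegral t₀ t₁ (P * V) = z * V.eval s := by
  have hspan : V ∈ Submodule.span ℝ (K '' Set.Iic r) := by
    rw [hK.span_eq_degreeLE, mem_degreeLE]
    exact degree_le_of_natDegree_le hV
  refine LinearMap.eqOn_span' (f := (polyIntegral t₀ t₁).comp (LinearMap.mulLeft ℝ P))
    (g := z • leval s) ?_ hspan
  rintro _ ⟨j, hj, rfl⟩
  simpa using hP j hj

lemma polyIntegral_sum_mul (hK : IsLegendreBasis t₀ t₁ K) (r : ℕ) (c : ℝ) (a : ℕ → ℝ)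
    {j : ℕ} (hj : j ≤ r) :
    polyIntegral t₀ t₁ ((C c * ∑ i ∈ Finset.range (r + 1), C (a i) * K i) * K j)
      = c * a j * ((t₁ - t₀) / (2 * (j : ℝ) + 1)) := by
  simp only [C_mul', Finset.smul_sum, smul_mul_assoc, Finset.sum_mul, map_sum, map_smul,
    hK.polyIntegral_mul, smul_eq_mul, mul_ite, mul_zero, Finset.sum_ite_eq',
    Finset.mem_range, Nat.lt_succ_iff.mpr hj, if_true]
  ring

lemma polyIntegral_Lop_mul (hK : IsLegendreBasis t₀ t₁ K) (hne : t₀ ≠ t₁) {r : ℕ} (z : ℝ)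
    {V : ℝ[X]} (hV : V.natDegree ≤ r) :
    polyIntegral t₀ t₁ (Lop t₀ t₁ r K z * V) = z * V.eval t₀ := by
  refine hK.polyIntegral_mul_eq_of_forall_le (fun j hj => ?_) hV
  have : t₁ - t₀ ≠ 0 := sub_ne_zero.mpr hne.symm
  rw [Lop, hK.polyIntegral_sum_mul r _ _ hj, hK.2.2.1 j]
  field_simp

lemma polyIntegral_LopE_mul (hK : IsLegendreBasis t₀ t₁ K) (hne : t₀ ≠ t₁) {r : ℕ} (z : ℝ)
    {V : ℝ[X]} (hV : V.natDegree ≤ r) :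
    polyIntegral t₀ t₁ (LopE t₀ t₁ r K z * V) = z * V.eval t₁ := by
  refine hK.polyIntegral_mul_eq_of_forall_le (fun j hj => ?_) hV
  have : t₁ - t₀ ≠ 0 := sub_ne_zero.mpr hne.symm
  rw [LopE, hK.polyIntegral_sum_mul r _ _ hj, hK.2.1 j]
  field_simp

end IsLegendreBasis

theorem stmt_3_general (t₀ t₁ : ℝ) (ht : t₀ < t₁) (r : ℕ) (K : ℕ → Polynomial ℝ)
    (hK : IsLegendreBasis t₀ t₁ K) (lam : ℝ)
    (ψ : Polynomial ℝ) (hψdeg : ψ.natDegree ≤ r)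
    (hψ : Gam t₀ t₁ r K lam ψ = Lop t₀ t₁ r K 1)
    (φ : Polynomial ℝ) (hφdeg : φ.natDegree ≤ r)
    (hφ : Polynomial.derivative φ - Polynomial.C lam * φ - LopE t₀ t₁ r K (φ.eval t₁)
      = Lop t₀ t₁ r K 1) :
    φ.eval t₀ = -ψ.eval t₀ := by
  have hψφ := congrArg (fun p => polyIntegral t₀ t₁ (p * φ)) hψ
  have hφψ := congrArg (fun p => polyIntegral t₀ t₁ (p * ψ)) hφ
  simp only [Gam, add_mul, sub_mul, map_add, map_sub, C_mul', smul_mul_assoc, map_smul,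
    smul_eq_mul, mul_comm φ ψ] at hψφ hφψ
  rw [hK.polyIntegral_Lop_mul ht.ne _ hφdeg, hK.polyIntegral_Lop_mul ht.ne _ hφdeg] at hψφ
  rw [hK.polyIntegral_LopE_mul ht.ne _ hψdeg, hK.polyIntegral_Lop_mul ht.ne _ hψdeg] at hφψ
  have hparts := polyIntegral_derivative t₀ t₁ (ψ * φ)
  rw [derivative_mul, map_add, mul_comm ψ, eval_mul, eval_mul] at hparts
  linear_combination hparts - hψφ - hφψ

/-- The initial values of the dG fundamental solution `ψ` and the dG dual solution `φ`
satisfy `φ(t₀) = -ψ(t₀)`. -/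
theorem stmt_3 (t₀ t₁ : ℝ) (ht : t₀ < t₁) (r : ℕ) (K : ℕ → Polynomial ℝ)
    (hK : IsLegendreBasis t₀ t₁ K) (lam : ℝ) (hlam : 0 ≤ lam)
    (ψ : Polynomial ℝ) (hψdeg : ψ.natDegree ≤ r)
    (hψ : Gam t₀ t₁ r K lam ψ = Lop t₀ t₁ r K 1)
    (φ : Polynomial ℝ) (hφdeg : φ.natDegree ≤ r)
    (hφ : Polynomial.derivative φ - Polynomial.C lam * φ - LopE t₀ t₁ r K (φ.eval t₁)
      = Lop t₀ t₁ r K 1) :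
    φ.eval t₀ = -ψ.eval t₀ :=
  stmt_3_general t₀ t₁ ht r K hK lam ψ hψdeg hψ φ hφdeg hφ
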